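/- arXiv:1508.02324 — 3 statements merged into one kernel-verified Lean document; each statement's English description precedes it below -/
import Mathlib

section
/- Let N1, N2, N3, N4 ≥ 1, let A be a third-order tensor of size N1 × N2 × N3 and B a third-order tensor of size N2 × N4 × N3 (both with entries in ℂ), and let C = A ∗ B be their t-product. Then for every i : Fin N1, j : Fin N4 and every frequency k : ZMod N3, one has (dft C(i,j))(k) = ∑_{l : Fin N2} (dft A(i,l))(k) · (dft B(l,j))(k); equivalently, each frontal slice of the Fourier-transformed tensor of C is the matrix product of the corresponding frontal slices of the Fourier-transformed tensors of A and B. -/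
open scoped BigOperators

/-- Circular convolution of two tubes of length `n`. -/
noncomputable def cconv {n : ℕ} [NeZero n] (a b : ZMod n → ℂ) : ZMod n → ℂ :=
  fun t => ∑ s : ZMod n, a s * b (t - s)

/-- Discrete Fourier transform of a tube of length `n`. -/
noncomputable def dft {n : ℕ} [NeZero n] (a : ZMod n → ℂ) : ZMod n → ℂ :=
  fun k => ∑ t : ZMod n,
    a t * Complex.exp (-2 * (Real.pi : ℂ) * Complex.I * ((k.val : ℂ) * (t.val : ℂ)) / (n : ℂ))

/-- t-product of third-order tensors. -/
noncomputable def tProduct {N1 N2 N3 N4 : ℕ} [NeZero N3]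
    (A : Fin N1 → Fin N2 → ZMod N3 → ℂ) (B : Fin N2 → Fin N4 → ZMod N3 → ℂ) :
    Fin N1 → Fin N4 → ZMod N3 → ℂ :=
  fun i j => ∑ l : Fin N2, cconv (A i l) (B l j)

/-!
The DFT at frequency `k` is summation against the additive character `t ↦ exp (-2πi k t / n)` of
`ZMod n`. Summing a convolution against any additive character of a finite group factors as the
product of the two sums, and the DFT is additive, so it turns the sum of convolutions defining the
t-product into the sum of pointwise products.
-/

open Finset

theorem AddChar.sum_convolution_mul {G R : Type*} [AddCommGroup G] [Fintype G] [CommRing R]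
    (ψ : AddChar G R) (a b : G → R) :
    ∑ t, (∑ s, a s * b (t - s)) * ψ t = (∑ s, a s * ψ s) * ∑ u, b u * ψ u := by
  simp_rw [sum_mul, mul_sum]
  rw [sum_comm]
  refine sum_congr rfl fun s _ => ?_
  refine Fintype.sum_equiv (Equiv.subRight s) _ _ fun t => ?_
  rw [Equiv.subRight_apply, mul_mul_mul_comm, ← ψ.map_add_eq_mul, add_sub_cancel]

/-- The DFT kernel depends on `k` and `t` only through `k * t` in `ZMod n`, despite being written
with representatives `k.val`, `t.val`. -/
theorem dft_apply_eq_sum_mul_addChar {n : ℕ} [NeZero n] (a : ZMod n → ℂ) (k : ZMod n) :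
    dft a k = ∑ t, a t * (ZMod.stdAddChar.mulShift (-k)) t := by
  refine sum_congr rfl fun t _ => ?_
  have : -k * t = ((-(k.val * t.val : ℕ) : ℤ) : ZMod n) := by simp
  rw [AddChar.mulShift_apply, this, ZMod.stdAddChar_coe]
  congr 2
  push_cast
  ring

theorem dft_cconv {n : ℕ} [NeZero n] (a b : ZMod n → ℂ) : dft (cconv a b) = dft a * dft b := by
  ext k
  simp only [Pi.mul_apply, dft_apply_eq_sum_mul_addChar]
  exact AddChar.sum_convolution_mul _ a b

theorem dft_sum {n : ℕ} [NeZero n] {ι : Type*} (s : Finset ι) (a : ι → ZMod n → ℂ) :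
    dft (∑ l ∈ s, a l) = ∑ l ∈ s, dft (a l) := by
  ext k
  simp only [dft, Finset.sum_apply, sum_mul]
  exact sum_comm

theorem stmt0_general (N1 N2 N3 N4 : ℕ) [NeZero N3]
    (A : Fin N1 → Fin N2 → ZMod N3 → ℂ) (B : Fin N2 → Fin N4 → ZMod N3 → ℂ)
    (C : Fin N1 → Fin N4 → ZMod N3 → ℂ) (hC : C = tProduct A B)
    (i : Fin N1) (j : Fin N4) (k : ZMod N3) :
    dft (C i j) k = ∑ l : Fin N2, dft (A i l) k * dft (B l j) k := by
  rw [hC, tProduct, dft_sum, Finset.sum_apply]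
  simp only [dft_cconv, Pi.mul_apply]

/-- the frontal slices of the Fourier transform of a t-product are the
matrix products of the corresponding frontal slices of the Fourier transforms. -/
theorem stmt0 (N1 N2 N3 N4 : ℕ) [NeZero N3]
    (hN1 : 1 ≤ N1) (hN2 : 1 ≤ N2) (hN3 : 1 ≤ N3) (hN4 : 1 ≤ N4)
    (A : Fin N1 → Fin N2 → ZMod N3 → ℂ) (B : Fin N2 → Fin N4 → ZMod N3 → ℂ)
    (C : Fin N1 → Fin N4 → ZMod N3 → ℂ) (hC : C = tProduct A B)
    (i : Fin N1) (j : Fin N4) (k : ZMod N3) :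
    dft (C i j) k = ∑ l : Fin N2, dft (A i l) k * dft (B l j) k :=
  stmt0_general N1 N2 N3 N4 A B C hC i j k
end

section
/- (Second-moment bound for importance sampling of tube-weighted columns, used in the proof of Lemma 5.1.) Let E be a nonzero third-order tensor of size N1 × N2 × N3 with entries in ℂ, with column norms ‖E_j‖² = ∑_{i,t} |E(i,j)(t)|² and ‖E‖_F² = ∑_j ‖E_j‖². Let v : Fin N2 → (ZMod N3 → ℂ) be a family of tubes satisfying ∑_{j} max_{k} |(dft v(j))(k)|² ≤ ξ0. Let p : Fin N2 → ℝ satisfy p(j) > 0 and p(j) ≥ θ·‖E_j‖²/‖E‖_F² for all j, for some θ > 0. Then ∑_{j} (1/p(j)) · ∑_{i} ∑_{t} |(E(i,j) ⋆ v(j))(t)|² ≤ (ξ0/θ)·‖E‖_F². -/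
open scoped BigOperators

/-!
By the convolution theorem and Plancherel's identity on `ZMod N3`,
`‖a ⋆ v‖² ≤ (max_k |v̂ k|²) ‖a‖²`, so column `j` contributes at most `m_j ‖E_j‖²`, where
`m_j = max_k |(dft v(j))(k)|²`. The sampling condition gives `1 / p j ≤ ‖E‖_F² / (θ ‖E_j‖²)`
whenever `E_j ≠ 0` (columns with `E_j = 0` contribute nothing), so the sum is at most
`(∑ j, m_j) ‖E‖_F² / θ ≤ ξ0 ‖E‖_F² / θ`.
-/

open Finset ComplexConjugate

namespace AddChar

theorem sum_mul_conv {G R : Type*} [AddCommGroup G] [Fintype G] [CommRing R]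
    (ψ : AddChar G R) (a b : G → R) :
    ∑ t, ψ t * ∑ s, a s * b (t - s) = (∑ t, ψ t * a t) * ∑ t, ψ t * b t := by
  calc ∑ t, ψ t * ∑ s, a s * b (t - s)
      = ∑ s, ∑ t, ψ s * a s * (ψ (t - s) * b (t - s)) := by
        rw [sum_comm]
        refine sum_congr rfl fun t _ => ?_
        rw [mul_sum]
        refine sum_congr rfl fun s _ => ?_
        rw [← sub_add_cancel t s, map_add_eq_mul, add_sub_cancel_right]
        ring
    _ = (∑ t, ψ t * a t) * ∑ t, ψ t * b t := by
        rw [sum_mul_sum]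
        exact sum_congr rfl fun s _ =>
          Fintype.sum_equiv (Equiv.subRight s) _ _ fun t => rfl

theorem IsPrimitive.sum_norm_sq_sum_mul {R : Type*} [CommRing R] [Fintype R] {ψ : AddChar R ℂ}
    (hψ : ψ.IsPrimitive) (a : R → ℂ) :
    ∑ k, ‖∑ j, ψ (j * k) * a j‖ ^ 2 = Fintype.card R * ∑ j, ‖a j‖ ^ 2 := by
  classical
  suffices h : ∑ k, (∑ j, ψ (j * k) * a j) * conj (∑ j, ψ (j * k) * a j) =
      Fintype.card R * ∑ j, a j * conj (a j) by
    simp_rw [Complex.mul_conj'] at h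
    exact_mod_cast h
  calc ∑ k, (∑ j, ψ (j * k) * a j) * conj (∑ j, ψ (j * k) * a j)
      = ∑ j, ∑ l, a j * conj (a l) * ∑ k, ψ (k * (j - l)) := by
        simp_rw [map_sum, map_mul, ← map_neg_eq_conj, sum_mul_sum, mul_sum]
        rw [sum_comm]
        refine sum_congr rfl fun j _ => ?_
        rw [sum_comm]
        refine sum_congr rfl fun l _ => sum_congr rfl fun k _ => ?_
        rw [mul_sub, sub_eq_add_neg, map_add_eq_mul, mul_comm k j, mul_comm k l]
        ring
    _ = Fintype.card R * ∑ j, a j * conj (a j) := by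
        simp [sum_mulShift _ hψ, sub_eq_zero, mul_sum, mul_comm]

end AddChar

namespace ZMod

variable {N : ℕ} [NeZero N]

theorem dft_apply_eq_sum_mulShift (a : ZMod N → ℂ) (k : ZMod N) :
    𝓕 a k = ∑ j, stdAddChar.mulShift (-k) j * a j := by
  rw [dft_apply]
  exact sum_congr rfl fun j _ => by
    rw [smul_eq_mul, AddChar.mulShift_apply, neg_mul, mul_comm j k]

theorem dft_conv (a b : ZMod N → ℂ) (k : ZMod N) :
    𝓕 (fun t => ∑ s, a s * b (t - s)) k = 𝓕 a k * 𝓕 b k := by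
  simp only [dft_apply_eq_sum_mulShift, AddChar.sum_mul_conv]

theorem sum_norm_dft_sq (a : ZMod N → ℂ) : ∑ k, ‖𝓕 a k‖ ^ 2 = N * ∑ j, ‖a j‖ ^ 2 := by
  have h := (isPrimitive_stdAddChar N).sum_norm_sq_sum_mul a
  rw [ZMod.card] at h
  rw [← h]
  refine Fintype.sum_equiv (Equiv.neg _) _ _ fun k => ?_
  simp only [dft_apply, smul_eq_mul, Equiv.neg_apply, mul_neg]

end ZMod

theorem dft_eq_zmod_dft {n : ℕ} [NeZero n] (a : ZMod n → ℂ) : dft a = ZMod.dft a := by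
  ext k
  refine sum_congr rfl fun t _ => ?_
  have : -(t * k) = (Int.cast (-(t.val * k.val : ℤ)) : ZMod n) := by push_cast; simp
  rw [smul_eq_mul, mul_comm, this, ZMod.stdAddChar_coe]
  congr 2
  push_cast
  ring

theorem sum_norm_cconv_sq_le {n : ℕ} [NeZero n] (a b : ZMod n → ℂ) {M : ℝ}
    (hM : ∀ k, ‖dft b k‖ ^ 2 ≤ M) : ∑ t, ‖cconv a b t‖ ^ 2 ≤ M * ∑ t, ‖a t‖ ^ 2 := by
  have hn : (0 : ℝ) < n := by exact_mod_cast NeZero.pos n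
  rw [← mul_le_mul_iff_right₀ hn, ← ZMod.sum_norm_dft_sq, mul_left_comm, ← ZMod.sum_norm_dft_sq,
    mul_sum]
  refine sum_le_sum fun k _ => ?_
  unfold cconv
  rw [ZMod.dft_conv, norm_mul, mul_pow, mul_comm M, ← dft_eq_zmod_dft b]
  exact mul_le_mul_of_nonneg_left (hM k) (sq_nonneg _)

theorem one_div_mul_le_of_le_mul {S m c F p θ : ℝ} (hθ : 0 < θ) (hS : S ≤ m * c) (hm : 0 ≤ m)
    (hc : 0 ≤ c) (hcF : c ≤ F) (hp : θ * (c / F) ≤ p) : 1 / p * S ≤ m / θ * F := by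
  have hF : 0 ≤ F := hc.trans hcF
  have hp0 : 0 ≤ 1 / p := one_div_nonneg.2 <| (by positivity : 0 ≤ θ * (c / F)).trans hp
  rcases hc.eq_or_lt with rfl | hc
  · calc 1 / p * S ≤ 0 := mul_nonpos_of_nonneg_of_nonpos hp0 (by simpa using hS)
      _ ≤ m / θ * F := by positivity
  · have hq : 0 < θ * (c / F) := by have := hc.trans_le hcF; positivity
    calc 1 / p * S ≤ 1 / p * (m * c) := mul_le_mul_of_nonneg_left hS hp0
      _ ≤ 1 / (θ * (c / F)) * (m * c) :=
        mul_le_mul_of_nonneg_right (one_div_le_one_div_of_le hq hp) (by positivity)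
      _ = m / θ * F := by field_simp

theorem sum_one_div_mul_le_of_le_mul {ι : Type*} [Fintype ι] {S m c p : ι → ℝ} {θ : ℝ}
    (hθ : 0 < θ) (hS : ∀ j, S j ≤ m j * c j) (hm : ∀ j, 0 ≤ m j) (hc : ∀ j, 0 ≤ c j)
    (hp : ∀ j, θ * (c j / ∑ j', c j') ≤ p j) :
    ∑ j, 1 / p j * S j ≤ (∑ j, m j) / θ * ∑ j, c j := by
  rw [sum_div, sum_mul]
  exact sum_le_sum fun j _ => one_div_mul_le_of_le_mul hθ (hS j) (hm j) (hc j)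
    (single_le_sum (fun j _ => hc j) (mem_univ j)) (hp j)

theorem stmt12_general (N1 N2 N3 : ℕ) [NeZero N3]
    (E : Fin N1 → Fin N2 → ZMod N3 → ℂ)
    (v : Fin N2 → ZMod N3 → ℂ) (ξ0 : ℝ)
    (hv : ∑ j : Fin N2,
        (Finset.univ.sup' Finset.univ_nonempty fun k : ZMod N3 => ‖dft (v j) k‖ ^ 2) ≤ ξ0)
    (p : Fin N2 → ℝ) (θ : ℝ) (hθ : 0 < θ)
    (hp : ∀ j, θ * ((∑ i : Fin N1, ∑ t : ZMod N3, ‖E i j t‖ ^ 2) /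
        ∑ j' : Fin N2, ∑ i : Fin N1, ∑ t : ZMod N3, ‖E i j' t‖ ^ 2) ≤ p j) :
    ∑ j : Fin N2, (1 / p j) * ∑ i : Fin N1, ∑ t : ZMod N3, ‖cconv (E i j) (v j) t‖ ^ 2 ≤
      (ξ0 / θ) * ∑ j' : Fin N2, ∑ i : Fin N1, ∑ t : ZMod N3, ‖E i j' t‖ ^ 2 := by
  set m : Fin N2 → ℝ := fun j => univ.sup' univ_nonempty fun k => ‖dft (v j) k‖ ^ 2
  have hm : ∀ j k, ‖dft (v j) k‖ ^ 2 ≤ m j := fun j k =>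
    le_sup' (fun k => ‖dft (v j) k‖ ^ 2) (mem_univ k)
  have hcol : ∀ j, ∑ i, ∑ t, ‖cconv (E i j) (v j) t‖ ^ 2 ≤ m j * ∑ i, ∑ t, ‖E i j t‖ ^ 2 :=
    fun j => by
      rw [mul_sum]
      exact sum_le_sum fun i _ => sum_norm_cconv_sq_le _ _ (hm j)
  calc _ ≤ (∑ j, m j) / θ * ∑ j', ∑ i, ∑ t, ‖E i j' t‖ ^ 2 :=
        sum_one_div_mul_le_of_le_mul hθ hcol (fun j => (sq_nonneg _).trans (hm j 0))
          (fun j => by positivity) hp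
    _ ≤ ξ0 / θ * ∑ j', ∑ i, ∑ t, ‖E i j' t‖ ^ 2 := by gcongr

/-- second-moment bound for importance sampling of tube-weighted
columns of a third-order tensor. -/
theorem stmt12 (N1 N2 N3 : ℕ) [NeZero N3]
    (E : Fin N1 → Fin N2 → ZMod N3 → ℂ) (hE : E ≠ 0)
    (v : Fin N2 → ZMod N3 → ℂ) (ξ0 : ℝ)
    (hv : ∑ j : Fin N2,
        (Finset.univ.sup' Finset.univ_nonempty fun k : ZMod N3 => ‖dft (v j) k‖ ^ 2) ≤ ξ0)
    (p : Fin N2 → ℝ) (θ : ℝ) (hθ : 0 < θ)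
    (hp0 : ∀ j, 0 < p j)
    (hp : ∀ j, θ * ((∑ i : Fin N1, ∑ t : ZMod N3, ‖E i j t‖ ^ 2) /
        ∑ j' : Fin N2, ∑ i : Fin N1, ∑ t : ZMod N3, ‖E i j' t‖ ^ 2) ≤ p j) :
    ∑ j : Fin N2, (1 / p j) * ∑ i : Fin N1, ∑ t : ZMod N3, ‖cconv (E i j) (v j) t‖ ^ 2 ≤
      (ξ0 / θ) * ∑ j' : Fin N2, ∑ i : Fin N1, ∑ t : ZMod N3, ‖E i j' t‖ ^ 2 :=
  stmt12_general N1 N2 N3 E v ξ0 hv p θ hθ hp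
end

section
/- (Vector Bernstein inequality, Lemma 8.2 of the paper.) Let X_1, …, X_n be independent random vectors in EuclideanSpace ℝ (Fin d) with E[X_i] = 0 for every i, ‖X_i‖ ≤ R almost surely for every i, and ∑_{i=1}^n E[‖X_i‖²] ≤ V for some V > 0. Then for every t with 0 < t ≤ V/R, the probability that ‖∑_{i=1}^n X_i‖ ≥ sqrt(V) + t is at most exp(−t²/(4V)). -/
/-!
Chernoff's method applied to `‖∑ Xᵢ‖`, with the norm replaced by
`Φₐ(v) = √(‖v‖² + a)` (`smoothNorm a v`).
`Φₐ` is `1`-Lipschitz and `Φₐ(s + Y)² = Φₐ(s)² + 2⟪s, Y⟫ + ‖Y‖²`, so for a centered `Y` with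
`E‖Y‖² = σ²` Jensen gives `E Φₐ(s + Y) ≤ Φ_{a+σ²}(s)`. Combined with `eˣ ≤ 1 + x + x²` for
`|x| ≤ 1` this yields `E exp(λ Φₐ(s + Y)) ≤ exp(λ Φ_{a+σ²}(s) + λ²σ²)` whenever `λR ≤ 1`.
Conditioning on the other summands and peeling them off one at a time moves all the variance into
the offset: `E exp(λ‖∑ Xᵢ‖) ≤ exp(λ√V + λ²V)`, and `λ = t / (2V)` gives the bound.
-/

open MeasureTheory ProbabilityTheory Real

section SmoothNorm

variable {E : Type*} [SeminormedAddCommGroup E]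

noncomputable def smoothNorm (a : ℝ) (v : E) : ℝ := √(‖v‖ ^ 2 + a)

@[simp] lemma smoothNorm_zero_left (v : E) : smoothNorm 0 v = ‖v‖ := by
  simp [smoothNorm, Real.sqrt_sq (norm_nonneg v)]

@[simp] lemma smoothNorm_zero_right (a : ℝ) : smoothNorm a (0 : E) = √a := by
  simp [smoothNorm]

@[fun_prop] lemma continuous_smoothNorm (a : ℝ) : Continuous (smoothNorm a : E → ℝ) := by
  unfold smoothNorm
  fun_prop

lemma smoothNorm_nonneg (a : ℝ) (v : E) : 0 ≤ smoothNorm a v := Real.sqrt_nonneg _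

lemma sq_smoothNorm {a : ℝ} (ha : 0 ≤ a) (v : E) : smoothNorm a v ^ 2 = ‖v‖ ^ 2 + a :=
  Real.sq_sqrt (by positivity)

lemma norm_le_smoothNorm {a : ℝ} (ha : 0 ≤ a) (v : E) : ‖v‖ ≤ smoothNorm a v :=
  Real.le_sqrt_of_sq_le (by linarith)

lemma smoothNorm_add_le {a : ℝ} (ha : 0 ≤ a) (v w : E) :
    smoothNorm a (v + w) ≤ smoothNorm a v + ‖w‖ := by
  rw [smoothNorm, Real.sqrt_le_iff]
  have hv := norm_le_smoothNorm ha v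
  refine ⟨add_nonneg (smoothNorm_nonneg a v) (norm_nonneg w), ?_⟩
  nlinarith [pow_le_pow_left₀ (norm_nonneg _) (norm_add_le v w) 2,
    mul_le_mul_of_nonneg_right hv (norm_nonneg w), sq_smoothNorm ha v]

lemma abs_smoothNorm_add_sub_le {a : ℝ} (ha : 0 ≤ a) (v w : E) :
    |smoothNorm a (v + w) - smoothNorm a v| ≤ ‖w‖ := by
  have h := smoothNorm_add_le ha (v + w) (-w)
  rw [add_neg_cancel_right, norm_neg] at h
  rw [abs_sub_le_iff]
  constructor <;> linarith [smoothNorm_add_le ha v w]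

end SmoothNorm

section Moments

variable {Ω : Type*} [MeasurableSpace Ω] {μ : Measure Ω}

lemma integrable_exp_of_ae_le [IsFiniteMeasure μ] {Z : Ω → ℝ} (hZ : AEStronglyMeasurable Z μ)
    {C : ℝ} (hZC : ∀ᵐ ω ∂μ, Z ω ≤ C) : Integrable (fun ω => exp (Z ω)) μ := by
  refine Integrable.of_bound (continuous_exp.comp_aestronglyMeasurable hZ) (exp C) ?_
  filter_upwards [hZC] with ω hω
  rw [Real.norm_of_nonneg (exp_pos _).le]
  exact exp_le_exp.2 hω

lemma integral_exp_le_exp_integral_add_integral_sq [IsProbabilityMeasure μ] {D : Ω → ℝ}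
    (hD : AEStronglyMeasurable D μ) (hD1 : ∀ᵐ ω ∂μ, |D ω| ≤ 1) :
    ∫ ω, exp (D ω) ∂μ ≤ exp (∫ ω, D ω ∂μ + ∫ ω, D ω ^ 2 ∂μ) := by
  have hDi : Integrable D μ := Integrable.of_bound hD 1 hD1
  have hD2i : Integrable (fun ω => D ω ^ 2) μ := (MemLp.of_bound hD 1 hD1).integrable_sq
  have hexpi := integrable_exp_of_ae_le hD (C := 1) <| by
    filter_upwards [hD1] with ω h using (abs_le.1 h).2
  calc ∫ ω, exp (D ω) ∂μ ≤ ∫ ω, 1 + D ω + D ω ^ 2 ∂μ := by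
        refine integral_mono_ae hexpi (((integrable_const 1).add hDi).add hD2i) ?_
        filter_upwards [hD1] with ω h
        linarith [(abs_le.1 (abs_exp_sub_one_sub_id_le h)).2]
    _ = 1 + ∫ ω, D ω ∂μ + ∫ ω, D ω ^ 2 ∂μ := by
        rw [integral_add (f := fun ω => 1 + D ω) ((integrable_const 1).add hDi) hD2i,
          integral_add (integrable_const 1) hDi]
        simp
    _ ≤ exp (∫ ω, D ω ∂μ + ∫ ω, D ω ^ 2 ∂μ) := by
        linarith [add_one_le_exp (∫ ω, D ω ∂μ + ∫ ω, D ω ^ 2 ∂μ)]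

lemma integral_sq_smoothNorm_add_sub_le {E : Type*} [NormedAddCommGroup E] {Y : Ω → E}
    (hY : MemLp Y 2 μ) {a : ℝ} (ha : 0 ≤ a) (s : E) :
    ∫ ω, (smoothNorm a (s + Y ω) - smoothNorm a s) ^ 2 ∂μ ≤ ∫ ω, ‖Y ω‖ ^ 2 ∂μ := by
  refine integral_mono_of_nonneg (ae_of_all _ fun ω => sq_nonneg _)
    ((memLp_two_iff_integrable_sq_norm hY.1).1 hY) (ae_of_all _ fun ω => ?_)
  simpa only [sq_abs] using
    pow_le_pow_left₀ (abs_nonneg _) (abs_smoothNorm_add_sub_le ha s (Y ω)) 2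

end Moments

section Step

variable {Ω E : Type*} [MeasurableSpace Ω] {μ : Measure Ω} [IsProbabilityMeasure μ]
  [NormedAddCommGroup E] [InnerProductSpace ℝ E] [CompleteSpace E]

lemma integral_smoothNorm_add_le {Y : Ω → E} (hY : MemLp Y 2 μ) (hY0 : ∫ ω, Y ω ∂μ = 0)
    {a : ℝ} (ha : 0 ≤ a) (s : E) :
    ∫ ω, smoothNorm a (s + Y ω) ∂μ ≤ smoothNorm (a + ∫ ω, ‖Y ω‖ ^ 2 ∂μ) s := by
  set f : Ω → ℝ := fun ω => smoothNorm a (s + Y ω)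
  have hf_sq : ∀ ω, f ω ^ 2 = (‖s‖ ^ 2 + a) + 2 * inner ℝ s (Y ω) + ‖Y ω‖ ^ 2 := fun ω => by
    rw [sq_smoothNorm ha, norm_add_sq_real]
    ring
  have h_inner : Integrable (fun ω => 2 * inner ℝ s (Y ω)) μ :=
    ((hY.integrable one_le_two).const_inner s).const_mul 2
  have h_norm_sq : Integrable (fun ω => ‖Y ω‖ ^ 2) μ :=
    (memLp_two_iff_integrable_sq_norm hY.1).1 hY
  have h_first : Integrable (fun ω => (‖s‖ ^ 2 + a) + 2 * inner ℝ s (Y ω)) μ :=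
    (integrable_const _).add h_inner
  have hf_int_sq : ∫ ω, f ω ^ 2 ∂μ = ‖s‖ ^ 2 + (a + ∫ ω, ‖Y ω‖ ^ 2 ∂μ) := by
    simp_rw [hf_sq]
    rw [integral_add h_first h_norm_sq, integral_add (integrable_const _) h_inner,
      integral_const_mul, integral_inner (hY.integrable one_le_two), hY0, inner_zero_right]
    simp only [integral_const, probReal_univ, one_smul]
    ring
  have hf : MemLp f 2 μ := by
    refine (memLp_two_iff_integrable_sq ?_).2 ?_
    · exact (continuous_smoothNorm a).comp_aestronglyMeasurable (hY.1.const_add s)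
    · simp_rw [hf_sq]
      exact h_first.add h_norm_sq
  have h_var := variance_nonneg f μ
  rw [variance_eq_sub hf] at h_var
  calc ∫ ω, f ω ∂μ ≤ √(∫ ω, f ω ^ 2 ∂μ) := Real.le_sqrt_of_sq_le (by simpa using h_var)
    _ = smoothNorm (a + ∫ ω, ‖Y ω‖ ^ 2 ∂μ) s := by rw [hf_int_sq, smoothNorm]

theorem integral_exp_smoothNorm_add_le {Y : Ω → E} (hYm : AEStronglyMeasurable Y μ)
    (hY0 : ∫ ω, Y ω ∂μ = 0) {R : ℝ} (hYR : ∀ᵐ ω ∂μ, ‖Y ω‖ ≤ R) {lam a : ℝ} (hlam : 0 ≤ lam)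
    (hlamR : lam * R ≤ 1) (ha : 0 ≤ a) (s : E) :
    ∫ ω, exp (lam * smoothNorm a (s + Y ω)) ∂μ ≤
      exp (lam * smoothNorm (a + ∫ ω, ‖Y ω‖ ^ 2 ∂μ) s + lam ^ 2 * ∫ ω, ‖Y ω‖ ^ 2 ∂μ) := by
  set σ := ∫ ω, ‖Y ω‖ ^ 2 ∂μ
  set b := smoothNorm a s
  set f : Ω → ℝ := fun ω => smoothNorm a (s + Y ω)
  have hY : MemLp Y 2 μ := MemLp.of_bound hYm R hYR
  have hfm : AEStronglyMeasurable f μ :=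
    (continuous_smoothNorm a).comp_aestronglyMeasurable (hYm.const_add s)
  have hf_int : Integrable f μ := by
    refine Integrable.of_bound hfm (b + R) ?_
    filter_upwards [hYR] with ω hω
    rw [Real.norm_of_nonneg (smoothNorm_nonneg _ _)]
    linarith [smoothNorm_add_le ha s (Y ω)]
  set D : Ω → ℝ := fun ω => lam * (f ω - b)
  have hD1 : ∀ᵐ ω ∂μ, |D ω| ≤ 1 := by
    filter_upwards [hYR] with ω hω
    rw [abs_mul, abs_of_nonneg hlam]
    exact (mul_le_mul_of_nonneg_left ((abs_smoothNorm_add_sub_le ha s (Y ω)).trans hω)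
      hlam).trans hlamR
  have hD_mean : ∫ ω, D ω ∂μ ≤ lam * (smoothNorm (a + σ) s - b) := by
    rw [integral_const_mul, integral_sub hf_int (integrable_const b), integral_const]
    simp only [probReal_univ, one_smul]
    gcongr
    exact integral_smoothNorm_add_le hY hY0 ha s
  have hD_sq : ∫ ω, D ω ^ 2 ∂μ ≤ lam ^ 2 * σ := by
    simp_rw [D, mul_pow]
    rw [integral_const_mul]
    exact mul_le_mul_of_nonneg_left (integral_sq_smoothNorm_add_sub_le hY ha s) (sq_nonneg lam)
  calc ∫ ω, exp (lam * f ω) ∂μ = ∫ ω, exp (lam * b) * exp (D ω) ∂μ := by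
        simp_rw [D, ← exp_add]
        ring_nf
    _ = exp (lam * b) * ∫ ω, exp (D ω) ∂μ := integral_const_mul _ _
    _ ≤ exp (lam * b) * exp (∫ ω, D ω ∂μ + ∫ ω, D ω ^ 2 ∂μ) := by
        gcongr
        exact integral_exp_le_exp_integral_add_integral_sq (by fun_prop) hD1
    _ ≤ exp (lam * b) * exp (lam * (smoothNorm (a + σ) s - b) + lam ^ 2 * σ) :=
        mul_le_mul_of_nonneg_left (exp_le_exp.2 (add_le_add hD_mean hD_sq)) (exp_pos _).le
    _ = exp (lam * smoothNorm (a + σ) s + lam ^ 2 * σ) := by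
        rw [← exp_add]
        ring_nf

theorem lintegral_exp_smoothNorm_add_le {Y : Ω → E} (hYm : AEStronglyMeasurable Y μ)
    (hY0 : ∫ ω, Y ω ∂μ = 0) {R : ℝ} (hYR : ∀ᵐ ω ∂μ, ‖Y ω‖ ≤ R) {lam a : ℝ} (hlam : 0 ≤ lam)
    (hlamR : lam * R ≤ 1) (ha : 0 ≤ a) (s : E) :
    ∫⁻ ω, ENNReal.ofReal (exp (lam * smoothNorm a (s + Y ω))) ∂μ ≤
      ENNReal.ofReal (exp (lam * smoothNorm (a + ∫ ω, ‖Y ω‖ ^ 2 ∂μ) s +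
        lam ^ 2 * ∫ ω, ‖Y ω‖ ^ 2 ∂μ)) := by
  have h_int := integrable_exp_of_ae_le (μ := μ) (C := lam * (smoothNorm a s + R))
      (Z := fun ω => lam * smoothNorm a (s + Y ω)) (by fun_prop) <| by
    filter_upwards [hYR] with ω hω
    gcongr
    linarith [smoothNorm_add_le ha s (Y ω)]
  rw [← ofReal_integral_eq_lintegral_ofReal h_int (ae_of_all _ fun _ => (exp_pos _).le)]
  exact ENNReal.ofReal_le_ofReal (integral_exp_smoothNorm_add_le hYm hY0 hYR hlam hlamR ha s)

end Step

lemma ProbabilityTheory.IndepFun.lintegral_comp_eq_lintegral_lintegral {Ω α β : Type*}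
    [MeasurableSpace Ω] [MeasurableSpace α] [MeasurableSpace β] {μ : Measure Ω}
    [IsFiniteMeasure μ] {f : Ω → α} {g : Ω → β} (hfg : IndepFun f g μ) (hf : AEMeasurable f μ)
    (hg : AEMeasurable g μ) {G : α × β → ENNReal} (hG : Measurable G) :
    ∫⁻ ω, G (f ω, g ω) ∂μ = ∫⁻ ω, ∫⁻ ω', G (f ω, g ω') ∂μ ∂μ := by
  calc ∫⁻ ω, G (f ω, g ω) ∂μ = ∫⁻ p, G p ∂(μ.map fun ω => (f ω, g ω)) :=
        (lintegral_map' hG.aemeasurable (hf.prodMk hg)).symm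
    _ = ∫⁻ p, G p ∂((μ.map f).prod (μ.map g)) := by rw [hfg.map_prod_eq_prod_map_map hf hg]
    _ = ∫⁻ x, ∫⁻ y, G (x, y) ∂(μ.map g) ∂(μ.map f) := lintegral_prod G hG.aemeasurable
    _ = ∫⁻ ω, ∫⁻ y, G (f ω, y) ∂(μ.map g) ∂μ :=
        lintegral_map' hG.lintegral_prod_right'.aemeasurable hf
    _ = ∫⁻ ω, ∫⁻ ω', G (f ω, g ω') ∂μ ∂μ := by
        congr with ω
        exact lintegral_map' (hG.comp measurable_prodMk_left).aemeasurable hg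

lemma measure_ge_le_exp_of_lintegral_exp_le {Ω : Type*} [MeasurableSpace Ω] {μ : Measure Ω}
    {Z : Ω → ℝ} (hZ : AEMeasurable Z μ) {lam M : ℝ} (hlam : 0 ≤ lam)
    (hM : ∫⁻ ω, ENNReal.ofReal (exp (lam * Z ω)) ∂μ ≤ ENNReal.ofReal (exp M)) (c : ℝ) :
    μ {ω | c ≤ Z ω} ≤ ENNReal.ofReal (exp (M - lam * c)) := by
  have h_sub : {ω | c ≤ Z ω} ⊆
      {ω | ENNReal.ofReal (exp (lam * c)) ≤ ENNReal.ofReal (exp (lam * Z ω))} := fun ω hω =>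
    ENNReal.ofReal_le_ofReal (exp_le_exp.2 (mul_le_mul_of_nonneg_left hω hlam))
  have h_markov := mul_meas_ge_le_lintegral₀ (hZ.const_mul lam).exp.ennreal_ofReal
    (ENNReal.ofReal (exp (lam * c)))
  rw [exp_sub, ENNReal.ofReal_div_of_pos (exp_pos _),
    ENNReal.le_div_iff_mul_le (Or.inl (by simp [exp_pos])) (Or.inl ENNReal.ofReal_ne_top)]
  calc μ {ω | c ≤ Z ω} * ENNReal.ofReal (exp (lam * c))
      ≤ ENNReal.ofReal (exp (lam * c)) *
          μ {ω | ENNReal.ofReal (exp (lam * c)) ≤ ENNReal.ofReal (exp (lam * Z ω))} := by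
        rw [mul_comm]
        gcongr
    _ ≤ ENNReal.ofReal (exp M) := h_markov.trans hM

section Sum

variable {Ω E ι : Type*} [MeasurableSpace Ω] {μ : Measure Ω} [IsProbabilityMeasure μ]
  [NormedAddCommGroup E] [InnerProductSpace ℝ E] [CompleteSpace E] [MeasurableSpace E]
  [BorelSpace E] [SecondCountableTopology E]

theorem lintegral_exp_smoothNorm_sum_le {X : ι → Ω → E} (hXm : ∀ i, Measurable (X i))
    (hindep : iIndepFun X μ) (hX0 : ∀ i, ∫ ω, X i ω ∂μ = 0) {R lam : ℝ}
    (hXR : ∀ i, ∀ᵐ ω ∂μ, ‖X i ω‖ ≤ R) (hlam : 0 ≤ lam) (hlamR : lam * R ≤ 1) (u : Finset ι)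
    {a : ℝ} (ha : 0 ≤ a) :
    ∫⁻ ω, ENNReal.ofReal (exp (lam * smoothNorm a (∑ i ∈ u, X i ω))) ∂μ ≤
      ENNReal.ofReal (exp (lam * √(a + ∑ i ∈ u, ∫ ω, ‖X i ω‖ ^ 2 ∂μ) +
        lam ^ 2 * ∑ i ∈ u, ∫ ω, ‖X i ω‖ ^ 2 ∂μ)) := by
  classical
  induction u using Finset.induction_on generalizing a with
  | empty => simp
  | insert j u hj ih =>
    set σ := ∫ ω, ‖X j ω‖ ^ 2 ∂μ
    set S : Ω → E := fun ω => ∑ i ∈ u, X i ω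
    have hS : Measurable S := Finset.measurable_sum u fun i _ => hXm i
    have h_indep : IndepFun S (X j) μ := by
      simpa [S, Finset.sum_fn] using hindep.indepFun_finsetSum_of_notMem hXm hj
    calc ∫⁻ ω, ENNReal.ofReal (exp (lam * smoothNorm a (∑ i ∈ insert j u, X i ω))) ∂μ
        = ∫⁻ ω, ∫⁻ ω', ENNReal.ofReal (exp (lam * smoothNorm a (S ω + X j ω'))) ∂μ ∂μ := by
          simp_rw [Finset.sum_insert hj, add_comm (X j _)]
          exact h_indep.lintegral_comp_eq_lintegral_lintegral hS.aemeasurable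
            (hXm j).aemeasurable
            (G := fun p => ENNReal.ofReal (exp (lam * smoothNorm a (p.1 + p.2)))) (by fun_prop)
      _ ≤ ∫⁻ ω, ENNReal.ofReal (exp (lam ^ 2 * σ)) *
            ENNReal.ofReal (exp (lam * smoothNorm (a + σ) (S ω))) ∂μ := by
          refine lintegral_mono fun ω => (lintegral_exp_smoothNorm_add_le
            (hXm j).aestronglyMeasurable (hX0 j) (hXR j) hlam hlamR ha (S ω)).trans_eq ?_
          rw [← ENNReal.ofReal_mul (exp_pos _).le, ← exp_add, add_comm]
      _ = ENNReal.ofReal (exp (lam ^ 2 * σ)) *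
            ∫⁻ ω, ENNReal.ofReal (exp (lam * smoothNorm (a + σ) (S ω))) ∂μ :=
          lintegral_const_mul' _ _ ENNReal.ofReal_ne_top
      _ ≤ ENNReal.ofReal (exp (lam ^ 2 * σ)) *
            ENNReal.ofReal (exp (lam * √(a + σ + ∑ i ∈ u, ∫ ω, ‖X i ω‖ ^ 2 ∂μ) +
              lam ^ 2 * ∑ i ∈ u, ∫ ω, ‖X i ω‖ ^ 2 ∂μ)) := by
          gcongr
          exact ih (add_nonneg ha (integral_nonneg fun _ => by positivity))
      _ = _ := by
          rw [← ENNReal.ofReal_mul (exp_pos _).le, ← exp_add, Finset.sum_insert hj]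
          simp only [σ]
          ring_nf

end Sum

/-- vector Bernstein inequality, Lemma 8.2: if `X 1, …, X n` are
independent centered random vectors in `ℝ^d`, bounded by `R` almost surely and with
total variance at most `V`, then for `0 < t ≤ V / R`,
`P(‖∑ i, X i‖ ≥ √V + t) ≤ exp(−t²/(4V))`. -/
theorem stmt13 (n d : ℕ)
    {Ω : Type*} [MeasurableSpace Ω] (μ : MeasureTheory.Measure Ω)
    [MeasureTheory.IsProbabilityMeasure μ]
    (X : Fin n → Ω → EuclideanSpace ℝ (Fin d))
    (hmeas : ∀ i, Measurable (X i))
    (hindep : ProbabilityTheory.iIndepFun X μ)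
    (hmean : ∀ i, ∫ ω, X i ω ∂μ = 0)
    (R : ℝ) (hR : ∀ i, ∀ᵐ ω ∂μ, ‖X i ω‖ ≤ R)
    (V : ℝ) (hV : 0 < V)
    (hvar : ∑ i : Fin n, ∫ ω, ‖X i ω‖ ^ 2 ∂μ ≤ V)
    (t : ℝ) (ht0 : 0 < t) (htV : t ≤ V / R) :
    μ {ω | Real.sqrt V + t ≤ ‖∑ i : Fin n, X i ω‖} ≤
      ENNReal.ofReal (Real.exp (-t ^ 2 / (4 * V))) := by
  have hR0 : 0 < R := by
    by_contra! hR0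
    linarith [div_nonpos_of_nonneg_of_nonpos hV.le hR0]
  set lam := t / (2 * V)
  have hlam : 0 ≤ lam := by positivity
  have hlamR : lam * R ≤ 1 := by
    rw [le_div_iff₀ hR0] at htV
    rw [div_mul_eq_mul_div, div_le_one (by positivity)]
    linarith
  have h_mgf : ∫⁻ ω, ENNReal.ofReal (exp (lam * ‖∑ i, X i ω‖)) ∂μ ≤
      ENNReal.ofReal (exp (lam * √V + lam ^ 2 * V)) := by
    have h := lintegral_exp_smoothNorm_sum_le hmeas hindep hmean hR hlam hlamR Finset.univ le_rfl
    simp only [smoothNorm_zero_left, zero_add] at h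
    refine h.trans ?_
    gcongr
  have h_tail := measure_ge_le_exp_of_lintegral_exp_le
    (Finset.measurable_sum Finset.univ fun i _ => hmeas i).norm.aemeasurable hlam h_mgf (√V + t)
  refine h_tail.trans_eq (congrArg _ (congrArg _ ?_))
  simp only [lam]
  field_simp
  ring
end
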